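/- Let N≥2, m>0, K∈ℕ with K≥1, and let μ_m^K be the probability measure on {η∈ℕ^N : ∑_{i=1}^N η_i = K} with μ_m^K(η) proportional to ∏_{i=1}^N Γ(m/2+η_i)/η_i!. Then as m→0, μ_m^K converges to the symmetric mixture (1/N) ∑_{i=1}^N δ_{K e_i}, where e_i ∈ ℕ^N is the configuration with K particles all at site i and zero elsewhere: μ_m^K(η = K e_i) → 1/N for each i, and μ_m^K(η) → 0 for every other configuration η with ∑η_i = K. -/
import Mathlib


open Filter Topology

/-- The unnormalized canonical weight of a configuration of the homogeneous SIP on `N`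
sites: `∏_i Γ(m/2+η_i)/η_i!`. -/
noncomputable def sipNWeight (m : ℝ) {N : ℕ} (η : Fin N → ℕ) : ℝ :=
  ∏ i, Real.Gamma (m / 2 + η i) / (η i).factorial

/-- The canonical measure of the homogeneous SIP on `N` sites with `K` particles. -/
noncomputable def sipNCanonical (m : ℝ) {N : ℕ} (K : ℕ) (η : Fin N → ℕ) : ℝ :=
  sipNWeight m η / ∑' ξ : {ξ : Fin N → ℕ // ∑ i, ξ i = K}, sipNWeight m ξ.1

/-- The configuration with all `K` particles at site `i`. -/
def pileAt {N : ℕ} [DecidableEq (Fin N)] (K : ℕ) (i : Fin N) : Fin N → ℕ :=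
  fun j => if j = i then K else 0

section Aux

open Finset

noncomputable instance sipConfigFintype (N K : ℕ) : Fintype {ξ : Fin N → ℕ // ∑ i, ξ i = K} :=
  Fintype.ofInjective
    (fun ξ => (fun i => (⟨ξ.1 i, Nat.lt_succ_of_le (by
      calc ξ.1 i ≤ ∑ j, ξ.1 j :=
        Finset.single_le_sum (fun j _ => Nat.zero_le _) (Finset.mem_univ i)
      _ = K := ξ.2)⟩ : Fin (K + 1)) : Fin N → Fin (K + 1)))
    (fun a b h => Subtype.ext (funext fun i => congrArg Fin.val (congrFun h i)))

/-- The rescaled weight `w_m(η) / Γ(m/2)^(N-1)`. -/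
noncomputable def sipG (m : ℝ) {N : ℕ} (η : Fin N → ℕ) : ℝ :=
  sipNWeight m η / (Real.Gamma (m / 2)) ^ (N - 1)

lemma gamma_factor_tendsto (k : ℕ) (hk : 1 ≤ k) :
    Tendsto (fun m : ℝ => Real.Gamma (m / 2 + k) / (k.factorial : ℝ)) (𝓝[>] 0)
      (𝓝 (Real.Gamma k / (k.factorial : ℝ))) := by
  have hne : ∀ n : ℕ, (k : ℝ) ≠ -n := by
    intro n hcon
    have h1 : (1 : ℝ) ≤ (k : ℝ) := by exact_mod_cast hk
    have h2 : (0 : ℝ) ≤ (n : ℝ) := Nat.cast_nonneg n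
    linarith [hcon]
  have h1 : Tendsto (fun m : ℝ => m / 2 + (k : ℝ)) (𝓝[>] 0) (𝓝 (k : ℝ)) := by
    have hcont : Continuous fun m : ℝ => m / 2 + (k : ℝ) := by continuity
    have := hcont.tendsto (0 : ℝ)
    norm_num at this
    exact this.mono_left nhdsWithin_le_nhds
  exact (((Real.differentiableAt_Gamma hne).continuousAt.tendsto).comp h1).div_const _

lemma gamma_inv_tendsto :
    Tendsto (fun m : ℝ => (Real.Gamma (m / 2))⁻¹) (𝓝[>] 0) (𝓝 0) := by
  have hc : Tendsto (fun m : ℝ => (m / 2) * (Real.Gamma (m / 2 + 1))⁻¹) (𝓝[>] 0)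
      (𝓝 0) := by
    have hne : ∀ n : ℕ, (1 : ℝ) ≠ -n := by
      intro n hcon
      have h2 : (0 : ℝ) ≤ (n : ℝ) := Nat.cast_nonneg n
      linarith [hcon]
    have h1 : Tendsto (fun m : ℝ => m / 2 + (1 : ℝ)) (𝓝[>] 0) (𝓝 (1 : ℝ)) := by
      have hcont : Continuous fun m : ℝ => m / 2 + (1 : ℝ) := by continuity
      have := hcont.tendsto (0 : ℝ)
      norm_num at this
      exact this.mono_left nhdsWithin_le_nhds
    have h2 : Tendsto (fun m : ℝ => (Real.Gamma (m / 2 + 1))⁻¹) (𝓝[>] 0)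
        (𝓝 ((Real.Gamma 1)⁻¹)) :=
      (((Real.differentiableAt_Gamma hne).continuousAt.tendsto).comp h1).inv₀
        (by rw [Real.Gamma_one]; norm_num)
    have h3 : Tendsto (fun m : ℝ => m / 2) (𝓝[>] 0) (𝓝 (0 : ℝ)) := by
      have hcont : Continuous fun m : ℝ => m / 2 := by continuity
      have := hcont.tendsto (0 : ℝ)
      norm_num at this
      exact this.mono_left nhdsWithin_le_nhds
    have := h3.mul h2
    simpa using this
  refine Tendsto.congr' ?_ hc
  filter_upwards [self_mem_nhdsWithin] with m hm
  have hm2 : (0 : ℝ) < m / 2 := by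
    simp only [Set.mem_Ioi] at hm; linarith
  rw [Real.Gamma_add_one hm2.ne', mul_inv, ← mul_assoc, mul_inv_cancel₀ hm2.ne', one_mul]

lemma sipG_pile {N : ℕ} (K : ℕ) (m : ℝ) (hm : 0 < m) (i : Fin N) :
    sipG m (pileAt K i) = Real.Gamma (m / 2 + K) / (K.factorial : ℝ) := by
  have hg : (0 : ℝ) < Real.Gamma (m / 2) := Real.Gamma_pos_of_pos (by linarith)
  have hw : sipNWeight m (pileAt K i)
      = (Real.Gamma (m / 2 + K) / (K.factorial : ℝ)) * (Real.Gamma (m / 2)) ^ (N - 1) := by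
    unfold sipNWeight
    rw [← Finset.mul_prod_erase Finset.univ _ (Finset.mem_univ i)]
    have h1 : pileAt K i i = K := by simp [pileAt]
    have h2 : ∀ j ∈ Finset.univ.erase i,
        Real.Gamma (m / 2 + (pileAt K i j : ℝ)) / ((pileAt K i j).factorial : ℝ)
          = Real.Gamma (m / 2) := by
      intro j hj
      have hji : j ≠ i := (Finset.mem_erase.mp hj).1
      simp [pileAt, hji]
    rw [Finset.prod_congr rfl h2, Finset.prod_const, Finset.card_erase_of_mem (Finset.mem_univ i),
      Finset.card_univ, Fintype.card_fin, h1]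
  unfold sipG
  rw [hw, mul_div_assoc, div_self (pow_ne_zero _ hg.ne'), mul_one]

lemma sipG_pile_tendsto {N : ℕ} (K : ℕ) (hK : 1 ≤ K) (i : Fin N) :
    Tendsto (fun m : ℝ => sipG m (pileAt K i)) (𝓝[>] 0)
      (𝓝 (Real.Gamma K / (K.factorial : ℝ))) := by
  refine Tendsto.congr' ?_ (gamma_factor_tendsto K hK)
  filter_upwards [self_mem_nhdsWithin] with m hm
  exact (sipG_pile K m hm i).symm

lemma sipG_nonpile_tendsto {N : ℕ} (K : ℕ) (hK : 1 ≤ K) (η : Fin N → ℕ)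
    (hsum : ∑ i, η i = K) (hnp : ¬ ∃ i : Fin N, η = pileAt K i) :
    Tendsto (fun m : ℝ => sipG m η) (𝓝[>] 0) (𝓝 0) := by
  classical
  set P : Finset (Fin N) := Finset.univ.filter (fun i => η i ≠ 0) with hP
  -- at least two nonzero entries
  have hp2 : 2 ≤ P.card := by
    have hex : ∃ i, η i ≠ 0 := by
      by_contra h
      push_neg at h
      have : ∑ i, η i = 0 := Finset.sum_eq_zero (fun i _ => h i)
      omega
    obtain ⟨i, hi⟩ := hex
    by_contra hlt
    push_neg at hlt
    have hiP : i ∈ P := by simp [hP, hi]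
    -- then P = {i}, so η = pileAt K i
    have hone : ∀ j, j ≠ i → η j = 0 := by
      intro j hj
      by_contra hj0
      have hjP : j ∈ P := by simp [hP, hj0]
      have : 2 ≤ P.card := Finset.one_lt_card.mpr ⟨i, hiP, j, hjP, fun h => hj h.symm⟩
      omega
    have hηi : η i = K := by
      have : ∑ j, η j = η i := by
        refine Finset.sum_eq_single i (fun j _ hj => hone j hj) (by simp)
      omega
    exact hnp ⟨i, funext fun j => by
      by_cases hji : j = i
      · subst hji; simp [pileAt, hηi]
      · simp [pileAt, hji, hone j hji]⟩
  have hcard : P.card + (Finset.univ.filter (fun i => ¬ η i ≠ 0)).card = N := by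
    rw [Finset.card_filter_add_card_filter_not, Finset.card_univ, Fintype.card_fin]
  set z := (Finset.univ.filter (fun i => ¬ η i ≠ 0)).card with hz
  set d := P.card - 1 with hd
  have hd1 : 1 ≤ d := by omega
  have hN1 : N - 1 = z + d := by omega
  -- factorization
  have hfac : ∀ m : ℝ, 0 < m → sipG m η =
      (∏ i ∈ P, Real.Gamma (m / 2 + (η i : ℝ)) / ((η i).factorial : ℝ))
        * ((Real.Gamma (m / 2))⁻¹) ^ d := by
    intro m hm
    have hg : (0 : ℝ) < Real.Gamma (m / 2) := Real.Gamma_pos_of_pos (by linarith)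
    have hw : sipNWeight m η =
        (∏ i ∈ P, Real.Gamma (m / 2 + (η i : ℝ)) / ((η i).factorial : ℝ))
          * (Real.Gamma (m / 2)) ^ z := by
      unfold sipNWeight
      rw [← Finset.prod_filter_mul_prod_filter_not Finset.univ (fun i => η i ≠ 0)]
      congr 1
      rw [← Finset.prod_const]
      refine Finset.prod_congr rfl ?_
      intro j hj
      have : η j = 0 := by simpa using (Finset.mem_filter.mp hj).2
      simp [this]
    have key : ∀ A B C : ℝ, B ≠ 0 → (A * B) / (B * C) = A * C⁻¹ := by
      intro A B C hB
      rw [mul_comm A B, mul_div_mul_left _ _ hB, div_eq_mul_inv]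
    unfold sipG
    rw [hw, hN1, pow_add, key _ _ _ (pow_ne_zero _ hg.ne'), inv_pow]
  have hA : Tendsto (fun m : ℝ =>
      ∏ i ∈ P, Real.Gamma (m / 2 + (η i : ℝ)) / ((η i).factorial : ℝ)) (𝓝[>] 0)
      (𝓝 (∏ i ∈ P, Real.Gamma (η i) / ((η i).factorial : ℝ))) := by
    refine tendsto_finset_prod _ (fun i hi => ?_)
    have : 1 ≤ η i := by
      have := (Finset.mem_filter.mp hi).2
      omega
    exact gamma_factor_tendsto (η i) this
  have hB : Tendsto (fun m : ℝ => ((Real.Gamma (m / 2))⁻¹) ^ d) (𝓝[>] 0) (𝓝 0) := by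
    have := gamma_inv_tendsto.pow d
    simpa [zero_pow (by omega : d ≠ 0)] using this
  have := hA.mul hB
  rw [mul_zero] at this
  refine Tendsto.congr' ?_ this
  filter_upwards [self_mem_nhdsWithin] with m hm
  exact (hfac m hm).symm

end Aux

/-- **Condensation on `N` sites as `m → 0`**: the canonical measure `μ_m^K` converges to
the symmetric mixture `(1/N) ∑_i δ_{K e_i}`: `μ_m^K(K e_i) → 1/N` for each site `i`, and
`μ_m^K(η) → 0` for every other configuration `η` with `∑_i η_i = K`. -/
theorem sip_N_site_condensation
    (N : ℕ) (hN : 2 ≤ N) (K : ℕ) (hK : 1 ≤ K) :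
    (∀ i : Fin N,
      Tendsto (fun m : ℝ => sipNCanonical m K (pileAt K i)) (𝓝[>] 0)
        (𝓝 (1 / (N : ℝ)))) ∧
    (∀ η : Fin N → ℕ, (∑ i, η i = K) → (¬ ∃ i : Fin N, η = pileAt K i) →
      Tendsto (fun m : ℝ => sipNCanonical m K η) (𝓝[>] 0) (𝓝 0)) := by
  classical
  set c : ℝ := Real.Gamma (K : ℝ) / (K.factorial : ℝ) with hc
  have hcpos : 0 < c := by
    have h1 : (0 : ℝ) < Real.Gamma (K : ℝ) := Real.Gamma_pos_of_pos (by exact_mod_cast hK)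
    have h2 : (0 : ℝ) < (K.factorial : ℝ) := by exact_mod_cast K.factorial_pos
    exact div_pos h1 h2
  -- injectivity of piles
  have huniq : ∀ i j : Fin N, pileAt K i = pileAt K j → i = j := by
    intro i j h
    by_contra hij
    have h2 := congrFun h i
    simp [pileAt, hij] at h2
    omega
  -- rewrite the canonical measure in terms of sipG
  have hform : ∀ (m : ℝ), 0 < m → ∀ η : Fin N → ℕ,
      sipNCanonical m K η = sipG m η /
        ∑ ξ : {ξ : Fin N → ℕ // ∑ i, ξ i = K}, sipG m ξ.1 := by
    intro m hm η
    have hg : (0 : ℝ) < (Real.Gamma (m / 2)) ^ (N - 1) :=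
      pow_pos (Real.Gamma_pos_of_pos (by linarith)) _
    unfold sipNCanonical sipG
    rw [tsum_fintype, ← Finset.sum_div, div_div_div_comm, div_self hg.ne', div_one]
  -- limit of the denominator
  have hden : Tendsto (fun m : ℝ =>
      ∑ ξ : {ξ : Fin N → ℕ // ∑ i, ξ i = K}, sipG m ξ.1) (𝓝[>] 0)
      (𝓝 ((N : ℝ) * c)) := by
    have hsum : ((N : ℝ) * c) =
        ∑ ξ : {ξ : Fin N → ℕ // ∑ i, ξ i = K},
          (if ∃ i : Fin N, ξ.1 = pileAt K i then c else 0) := by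
      have hstep : ∀ ξ : {ξ : Fin N → ℕ // ∑ i, ξ i = K},
          (if ∃ i : Fin N, ξ.1 = pileAt K i then c else 0)
            = ∑ i : Fin N, (if ξ.1 = pileAt K i then c else 0) := by
        intro ξ
        by_cases h : ∃ i : Fin N, ξ.1 = pileAt K i
        · obtain ⟨i, hi⟩ := h
          rw [if_pos ⟨i, hi⟩]
          rw [Finset.sum_eq_single_of_mem i (Finset.mem_univ i)]
          · rw [if_pos hi]
          · intro j _ hj
            rw [if_neg]
            intro hcon
            exact hj (huniq j i (by rw [← hi, ← hcon]))
        · rw [if_neg h]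
          refine (Finset.sum_eq_zero ?_).symm
          intro i _
          exact if_neg (fun hcon => h ⟨i, hcon⟩)
      rw [Finset.sum_congr rfl (fun ξ _ => hstep ξ), Finset.sum_comm]
      have hinner : ∀ i : Fin N,
          (∑ ξ : {ξ : Fin N → ℕ // ∑ i, ξ i = K}, (if ξ.1 = pileAt K i then c else 0)) = c := by
        intro i
        have hmem : (∑ j, pileAt K i j) = K := by
          simp [pileAt, Finset.sum_ite_eq']
        rw [Finset.sum_eq_single_of_mem (⟨pileAt K i, hmem⟩ :
            {ξ : Fin N → ℕ // ∑ i, ξ i = K}) (Finset.mem_univ _)]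
        · rw [if_pos rfl]
        · intro ξ _ hξ
          refine if_neg (fun hcon => hξ (Subtype.ext hcon))
      rw [Finset.sum_congr rfl (fun i _ => hinner i), Finset.sum_const, Finset.card_univ,
        Fintype.card_fin, nsmul_eq_mul]
    rw [hsum]
    refine tendsto_finset_sum _ (fun ξ _ => ?_)
    by_cases h : ∃ i : Fin N, ξ.1 = pileAt K i
    · obtain ⟨i, hi⟩ := h
      rw [if_pos ⟨i, hi⟩]
      have := sipG_pile_tendsto (N := N) K hK i
      refine this.congr (fun m => by rw [hi])
    · rw [if_neg h]
      exact sipG_nonpile_tendsto K hK ξ.1 ξ.2 h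
  have hNc : (N : ℝ) * c ≠ 0 := by
    have : (0 : ℝ) < N := by exact_mod_cast (by omega : 0 < N)
    positivity
  constructor
  · intro i
    have hlim := (sipG_pile_tendsto (N := N) K hK i).div hden hNc
    have heq : c / ((N : ℝ) * c) = 1 / (N : ℝ) := by
      rw [mul_comm, ← div_div, div_self hcpos.ne']
    rw [heq] at hlim
    refine Tendsto.congr' ?_ hlim
    filter_upwards [self_mem_nhdsWithin] with m hm
    exact (hform m hm _).symm
  · intro η hsum hnp
    have hlim := (sipG_nonpile_tendsto K hK η hsum hnp).div hden hNc
    rw [zero_div] at hlim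
    refine Tendsto.congr' ?_ hlim
    filter_upwards [self_mem_nhdsWithin] with m hm
    exact (hform m hm _).symm
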